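/- Let (a, b, c) be positive integers with a < b < c, gcd(a,b) = gcd(ab, c) = 1, and let L = {(x,y,z) ∈ ℤ^3 : ax + by − cz = 0}. If l0, l1 ∈ L are linearly independent over ℚ, then for every integer k ≥ 2 the three vectors l0, l1, (a^k, b^k, c^k) are linearly independent over ℚ. -/
import Mathlib

theorem stmt_7 (hFLT : FermatLastTheorem)
    (a b c : ℤ) (ha : 0 < a) (hab : a < b) (hbc : b < c)
    (h1 : IsCoprime a b) (h2 : IsCoprime (a * b) c)
    (l0 l1 : Fin 3 → ℤ)
    (hl0 : a * l0 0 + b * l0 1 - c * l0 2 = 0)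
    (hl1 : a * l1 0 + b * l1 1 - c * l1 2 = 0)
    (hind : LinearIndependent ℚ ![((↑) ∘ l0 : Fin 3 → ℚ), ((↑) ∘ l1 : Fin 3 → ℚ)]) :
    ∀ k : ℕ, 2 ≤ k →
      LinearIndependent ℚ ![((↑) ∘ l0 : Fin 3 → ℚ), ((↑) ∘ l1 : Fin 3 → ℚ),
        ![(a : ℚ) ^ k, (b : ℚ) ^ k, (c : ℚ) ^ k]] := by
  intro k hk
  set v0 : Fin 3 → ℚ := ((↑) ∘ l0 : Fin 3 → ℚ)
  set v1 : Fin 3 → ℚ := ((↑) ∘ l1 : Fin 3 → ℚ)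
  set w : Fin 3 → ℚ := ![(a : ℚ) ^ k, (b : ℚ) ^ k, (c : ℚ) ^ k]
  have heq : ![v0, v1, w] = Fin.snoc ![v0, v1] w := by
    funext i
    fin_cases i <;> simp [Fin.snoc] <;> rfl
  rw [heq, linearIndependent_fin_snoc]
  refine ⟨hind, ?_⟩
  intro hmem
  have hrange : Set.range ![v0, v1] = {v0, v1} := by
    ext x
    simp [Fin.exists_fin_two]; tauto
  rw [hrange, Submodule.mem_span_pair] at hmem
  obtain ⟨α, β, hαβ⟩ := hmem
  have e0 := congrFun hαβ 0
  have e1 := congrFun hαβ 1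
  have e2 := congrFun hαβ 2
  simp only [v0, v1, w, Pi.add_apply, Pi.smul_apply, smul_eq_mul, Function.comp_apply,
    Matrix.cons_val_zero, Matrix.cons_val_one, Matrix.head_cons,
    Matrix.cons_val_two, Matrix.tail_cons] at e0 e1 e2
  -- key equation
  have hf0 : (a : ℚ) * (l0 0 : ℚ) + (b : ℚ) * (l0 1 : ℚ) - (c : ℚ) * (l0 2 : ℚ) = 0 := by
    exact_mod_cast congrArg (fun x : ℤ => (x : ℚ)) hl0
  have hf1 : (a : ℚ) * (l1 0 : ℚ) + (b : ℚ) * (l1 1 : ℚ) - (c : ℚ) * (l1 2 : ℚ) = 0 := by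
    exact_mod_cast congrArg (fun x : ℤ => (x : ℚ)) hl1
  have hkey : (a : ℚ) ^ (k + 1) + (b : ℚ) ^ (k + 1) - (c : ℚ) ^ (k + 1) = 0 := by
    have : (a : ℚ) ^ (k+1) + (b:ℚ)^(k+1) - (c:ℚ)^(k+1)
        = α * ((a : ℚ) * (l0 0 : ℚ) + (b : ℚ) * (l0 1 : ℚ) - (c : ℚ) * (l0 2 : ℚ))
        + β * ((a : ℚ) * (l1 0 : ℚ) + (b : ℚ) * (l1 1 : ℚ) - (c : ℚ) * (l1 2 : ℚ)) := by
      rw [pow_succ, pow_succ, pow_succ, ← e0, ← e1, ← e2]; ring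
    rw [this, hf0, hf1]; ring
  have hZ : a ^ (k + 1) + b ^ (k + 1) = c ^ (k + 1) := by
    have h : ((a ^ (k+1) + b ^ (k+1) : ℤ) : ℚ) = ((c ^ (k+1) : ℤ) : ℚ) := by
      push_cast; linarith [hkey]
    exact_mod_cast h
  have hb : 0 < b := lt_trans ha hab
  have hc : 0 < c := lt_trans hb hbc
  have := (fermatLastTheoremFor_iff_int.mp (hFLT (k+1) (by omega))) a b c ha.ne' hb.ne' hc.ne'
  exact this hZ
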